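/- arXiv:1806.02838 — 3 statements merged into one kernel-verified Lean document; each statement's English description precedes it below -/
import Mathlib

section
/- Let G be a bipartite graph with bipartition (A, B), and set d_A = e(G)/|A| and d_B = e(G)/|B|. Then there exists a subgraph G' of G with e(G') ≥ e(G)/2 such that every vertex of V(G') ∩ A has degree at least d_A/4 in G' and every vertex of V(G') ∩ B has degree at least d_B/4 in G'. -/
open SimpleGraph

/-!
Delete, one at a time, vertices whose degree is below a prescribed weight `w v`. Deleting `v`
destroys fewer than `w v` edges, so the potential `e(H) - ∑_{v ∈ V(H)} w v` never decreases,
and the process stops at a subgraph in which every vertex `v` has degree at least `w v`. With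
weight `d_A / 4` on `A` and `d_B / 4` on `B` the total weight is at most `e(G) / 2`, so the
final subgraph keeps at least half of the edges.
-/

namespace SimpleGraph.Subgraph

variable {V : Type*} {G : SimpleGraph V}

lemma deleteVerts_singleton_lt {H : G.Subgraph} {v : V} (hv : v ∈ H.verts) :
    H.deleteVerts {v} < H :=
  deleteVerts_le.lt_of_ne fun h => by simpa using congrArg (v ∈ ·.verts) h |>.mpr hv

lemma edgeSet_subset_deleteVerts_singleton_union (H : G.Subgraph) (v : V) :
    H.edgeSet ⊆ (H.deleteVerts {v}).edgeSet ∪ (fun w => s(v, w)) '' H.neighborSet v := by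
  intro e he
  induction e using Sym2.ind with
  | _ x y =>
    by_cases hx : x = v
    · subst hx
      exact Or.inr ⟨y, he, rfl⟩
    by_cases hy : y = v
    · subst hy
      exact Or.inr ⟨x, H.adj_symm he, Sym2.eq_swap⟩
    exact Or.inl (deleteVerts_adj.mpr ⟨H.edge_vert he, hx, H.edge_vert (H.adj_symm he), hy, he⟩)

lemma ncard_edgeSet_le_deleteVerts_singleton [Finite V] (H : G.Subgraph) (v : V) :
    H.edgeSet.ncard ≤ (H.deleteVerts {v}).edgeSet.ncard + (H.neighborSet v).ncard :=
  calc H.edgeSet.ncard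
      ≤ ((H.deleteVerts {v}).edgeSet ∪ (fun w => s(v, w)) '' H.neighborSet v).ncard :=
        Set.ncard_le_ncard (H.edgeSet_subset_deleteVerts_singleton_union v) (Set.toFinite _)
    _ ≤ (H.deleteVerts {v}).edgeSet.ncard + ((fun w => s(v, w)) '' H.neighborSet v).ncard :=
        Set.ncard_union_le _ _
    _ ≤ (H.deleteVerts {v}).edgeSet.ncard + (H.neighborSet v).ncard := by
        grw [Set.ncard_image_le (Set.toFinite _)]

theorem exists_le_forall_le_ncard_neighborSet [Finite V] (w : V → ℝ) (H : G.Subgraph) :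
    ∃ H' ≤ H, (∀ v ∈ H'.verts, w v ≤ (H'.neighborSet v).ncard) ∧
      (H.edgeSet.ncard : ℝ) - ∑ᶠ v ∈ H.verts, w v
        ≤ H'.edgeSet.ncard - ∑ᶠ v ∈ H'.verts, w v := by
  induction H using WellFoundedLT.induction with
  | _ H ih =>
    by_cases hgood : ∀ v ∈ H.verts, w v ≤ (H.neighborSet v).ncard
    · exact ⟨H, le_rfl, hgood, le_rfl⟩
    push Not at hgood
    obtain ⟨v, hv, hlow⟩ := hgood
    obtain ⟨H', hle, hdeg, hpot⟩ := ih _ (deleteVerts_singleton_lt hv)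
    refine ⟨H', hle.trans deleteVerts_le, hdeg, le_trans ?_ hpot⟩
    have hsum : ∑ᶠ u ∈ H.verts, w u = w v + ∑ᶠ u ∈ (H.deleteVerts {v}).verts, w u := by
      rw [deleteVerts_verts, ← finsum_mem_insert _ (fun h => h.2 rfl) (Set.toFinite _),
        Set.insert_sdiff_singleton, Set.insert_eq_of_mem hv]
    have hedge : (H.edgeSet.ncard : ℝ)
        ≤ (H.deleteVerts {v}).edgeSet.ncard + (H.neighborSet v).ncard := by
      exact_mod_cast H.ncard_edgeSet_le_deleteVerts_singleton v
    linarith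

end SimpleGraph.Subgraph

theorem SimpleGraph.exists_subgraph_forall_le_ncard_neighborSet {V : Type*} [Finite V]
    (G : SimpleGraph V) {w : V → ℝ} (hw : 0 ≤ w) :
    ∃ H : G.Subgraph, (G.edgeSet.ncard : ℝ) - ∑ᶠ v, w v ≤ H.edgeSet.ncard ∧
      ∀ v ∈ H.verts, w v ≤ (H.neighborSet v).ncard := by
  obtain ⟨H, -, hdeg, hpot⟩ := (⊤ : G.Subgraph).exists_le_forall_le_ncard_neighborSet w
  have hH : 0 ≤ ∑ᶠ v ∈ H.verts, w v := finsum_nonneg fun v => finsum_nonneg fun _ => hw v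
  rw [Subgraph.edgeSet_top, Subgraph.verts_top, finsum_mem_univ] at hpot
  exact ⟨H, by linarith, hdeg⟩

lemma finsum_indicator_const {α : Type*} [Finite α] (s : Set α) (c : ℝ) :
    ∑ᶠ x, s.indicator (fun _ => c) x = s.ncard * c := by
  rw [← finsum_mem_def, finsum_mem_eq_finite_toFinset_sum _ s.toFinite, Finset.sum_const,
    nsmul_eq_mul, Set.ncard_eq_toFinset_card s]

lemma natCast_mul_div_natCast_le {x : ℝ} (hx : 0 ≤ x) (n : ℕ) : n * (x / n) ≤ x := by
  rcases eq_or_ne (n : ℝ) 0 with h | h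
  · simpa [h] using hx
  · rw [mul_div_cancel₀ _ h]

theorem min_degree_bipartite_subgraph_general {V : Type*} [Fintype V] (G : SimpleGraph V)
    (A B : Set V) :
    ∃ G' : G.Subgraph,
      (G.edgeSet.ncard : ℝ) / 2 ≤ (G'.edgeSet.ncard : ℝ) ∧
      (∀ v ∈ G'.verts ∩ A,
        (G.edgeSet.ncard : ℝ) / A.ncard / 4 ≤ ((G'.neighborSet v).ncard : ℝ)) ∧
      (∀ v ∈ G'.verts ∩ B,
        (G.edgeSet.ncard : ℝ) / B.ncard / 4 ≤ ((G'.neighborSet v).ncard : ℝ)) := by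
  set e : ℝ := (G.edgeSet.ncard : ℝ)
  have ha : 0 ≤ e / A.ncard / 4 := by positivity
  have hb : 0 ≤ e / B.ncard / 4 := by positivity
  obtain ⟨H, hedges, hdeg⟩ := G.exists_subgraph_forall_le_ncard_neighborSet
    (w := A.indicator (fun _ => e / A.ncard / 4) + B.indicator (fun _ => e / B.ncard / 4))
    (add_nonneg (Set.indicator_nonneg fun _ _ => ha) (Set.indicator_nonneg fun _ _ => hb))
  have htotal : ∑ᶠ v, (A.indicator (fun _ => e / A.ncard / 4) v
      + B.indicator (fun _ => e / B.ncard / 4) v) ≤ e / 2 := by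
    rw [finsum_add_distrib (Set.toFinite _) (Set.toFinite _), finsum_indicator_const,
      finsum_indicator_const, div_right_comm e (A.ncard : ℝ), div_right_comm e (B.ncard : ℝ)]
    linarith [natCast_mul_div_natCast_le (x := e / 4) (by positivity) A.ncard,
      natCast_mul_div_natCast_le (x := e / 4) (by positivity) B.ncard]
  refine ⟨H, by simp only [Pi.add_apply] at hedges; linarith, fun v hv => ?_, fun v hv => ?_⟩
  · refine le_trans ?_ (hdeg v hv.1)
    exact le_add_of_le_of_nonneg (Set.indicator_of_mem hv.2 fun _ => _).symm.le
      (Set.indicator_nonneg (fun _ _ => hb) v)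
  · refine le_trans ?_ (hdeg v hv.1)
    exact le_add_of_nonneg_of_le (Set.indicator_nonneg (fun _ _ => ha) v)
      (Set.indicator_of_mem hv.2 fun _ => _).symm.le

/-- Let `G` be a bipartite graph with bipartition `(A, B)`, and set `d_A = e(G)/|A|`,
`d_B = e(G)/|B|`. Then `G` has a subgraph `G'` with `e(G') ≥ e(G)/2` in which every vertex
of `V(G') ∩ A` has degree at least `d_A/4` and every vertex of `V(G') ∩ B` has degree at
least `d_B/4`. -/
theorem min_degree_bipartite_subgraph {V : Type*} [Fintype V] (G : SimpleGraph V)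
    (A B : Set V) (hdisj : Disjoint A B) (hcover : A ∪ B = Set.univ)
    (hbip : ∀ ⦃u v⦄, G.Adj u v → (u ∈ A ∧ v ∈ B) ∨ (u ∈ B ∧ v ∈ A)) :
    ∃ G' : G.Subgraph,
      (G.edgeSet.ncard : ℝ) / 2 ≤ (G'.edgeSet.ncard : ℝ) ∧
      (∀ v ∈ G'.verts ∩ A,
        (G.edgeSet.ncard : ℝ) / A.ncard / 4 ≤ ((G'.neighborSet v).ncard : ℝ)) ∧
      (∀ v ∈ G'.verts ∩ B,
        (G.edgeSet.ncard : ℝ) / B.ncard / 4 ≤ ((G'.neighborSet v).ncard : ℝ)) :=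
  min_degree_bipartite_subgraph_general G A B
end

section
/- Let t be a positive integer and let G be an n-vertex bipartite graph with at least 4tn edges. Then the number of t-matchings in G (sets of t pairwise disjoint edges) is at least e(G)^t / (2^t · t!). -/
open SimpleGraph

/-- A `t`-matching in `G`: a set of `t` pairwise vertex-disjoint edges of `G`. -/
def IsMatchingIn {V : Type*} (G : SimpleGraph V) (t : ℕ) (M : Finset (Sym2 V)) : Prop :=
  M.card = t ∧ ↑M ⊆ G.edgeSet ∧
    (M : Set (Sym2 V)).Pairwise fun e f => ∀ x : V, ¬(x ∈ e ∧ x ∈ f)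

/-!
Let `m_k` be the number of `k`-matchings and `e = e(G)`. Counting pairs `(M, f)` with `M` a
`k`-matching and `f` an edge disjoint from it gives `(k + 1) m_{k+1} = ∑_M #ext(M)`. An edge
fails to extend `M` only if it meets one of the `2k` vertices of `M`, each of which lies on fewer
than `n` edges, so `#ext(M) ≥ e - 2kn ≥ e / 2` as long as `e ≥ 4kn`. Hence
`e m_k ≤ 2 (k + 1) m_{k+1}` for `k < t`, and induction from `m_0 = 1` gives `e^t ≤ 2^t t! m_t`.
-/

open Finset

namespace SimpleGraph

variable {V : Type*} [Fintype V] (G : SimpleGraph V)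

open Classical in
noncomputable def matchings (k : ℕ) : Finset (Finset (Sym2 V)) :=
  {M | IsMatchingIn G k M}

variable {G} in
@[simp]
lemma mem_matchings {k : ℕ} {M : Finset (Sym2 V)} :
    M ∈ G.matchings k ↔ IsMatchingIn G k M := by
  simp [matchings]

variable [DecidableEq V] [DecidableRel G.Adj]

open Classical in
noncomputable def extensions (M : Finset (Sym2 V)) : Finset (Sym2 V) :=
  {f ∈ G.edgeFinset | ∀ g ∈ M, ∀ x : V, ¬(x ∈ f ∧ x ∈ g)}

variable {G}

lemma mem_extensions {M : Finset (Sym2 V)} {f : Sym2 V} :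
    f ∈ G.extensions M ↔ f ∈ G.edgeSet ∧ ∀ g ∈ M, ∀ x : V, ¬(x ∈ f ∧ x ∈ g) := by
  simp [extensions]

lemma notMem_of_mem_extensions {M : Finset (Sym2 V)} {f : Sym2 V}
    (hf : f ∈ G.extensions M) : f ∉ M := fun hfM => by
  induction f using Sym2.ind with
  | _ a b =>
    exact (mem_extensions.1 hf).2 _ hfM a ⟨Sym2.mem_mk_left a b, Sym2.mem_mk_left a b⟩

lemma IsMatchingIn.insert {k : ℕ} {M : Finset (Sym2 V)} {f : Sym2 V} (hM : IsMatchingIn G k M)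
    (hf : f ∈ G.extensions M) : IsMatchingIn G (k + 1) (insert f M) := by
  obtain ⟨hcard, hsub, hpw⟩ := hM
  obtain ⟨hfG, hdisj⟩ := mem_extensions.1 hf
  refine ⟨by rw [card_insert_of_notMem (notMem_of_mem_extensions hf), hcard], ?_, ?_⟩
  · rw [coe_insert]
    exact Set.insert_subset hfG hsub
  · rw [coe_insert]
    exact hpw.insert fun g hg _ => ⟨hdisj g hg, fun x hx => hdisj g hg x hx.symm⟩

lemma IsMatchingIn.erase {k : ℕ} {M : Finset (Sym2 V)} {f : Sym2 V}
    (hM : IsMatchingIn G (k + 1) M) (hf : f ∈ M) :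
    IsMatchingIn G k (M.erase f) ∧ f ∈ G.extensions (M.erase f) := by
  obtain ⟨hcard, hsub, hpw⟩ := hM
  have herase : (↑(M.erase f) : Set (Sym2 V)) ⊆ M := coe_subset.2 (erase_subset f M)
  refine ⟨⟨by rw [card_erase_of_mem hf, hcard, Nat.add_sub_cancel], herase.trans hsub,
    hpw.mono herase⟩, mem_extensions.2 ⟨hsub hf, fun g hg => ?_⟩⟩
  exact hpw hf (mem_of_mem_erase hg) (ne_of_mem_erase hg).symm

lemma succ_mul_card_matchings (k : ℕ) :
    (k + 1) * #(G.matchings (k + 1)) = ∑ M ∈ G.matchings k, #(G.extensions M) := by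
  calc (k + 1) * #(G.matchings (k + 1))
      = ∑ M ∈ G.matchings (k + 1), #M := by
        rw [sum_congr rfl fun M hM => (mem_matchings.1 hM).1, sum_const, smul_eq_mul, mul_comm]
    _ = #((G.matchings (k + 1)).sigma fun M => M) := (card_sigma _ _).symm
    _ = #((G.matchings k).sigma G.extensions) := by
        refine card_nbij' (fun p => ⟨p.1.erase p.2, p.2⟩) (fun p => ⟨insert p.2 p.1, p.2⟩)
          ?_ ?_ ?_ ?_
        · rintro ⟨M, f⟩ hp
          simp only [coe_sigma, Set.mem_sigma_iff, mem_coe, mem_matchings] at hp ⊢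
          exact hp.1.erase hp.2
        · rintro ⟨M, f⟩ hp
          simp only [coe_sigma, Set.mem_sigma_iff, mem_coe, mem_matchings] at hp ⊢
          exact ⟨hp.1.insert hp.2, mem_insert_self f M⟩
        · rintro ⟨M, f⟩ hp
          simp only [coe_sigma, Set.mem_sigma_iff, mem_coe] at hp
          simp [insert_erase hp.2]
        · rintro ⟨M, f⟩ hp
          simp only [coe_sigma, Set.mem_sigma_iff, mem_coe] at hp
          simp [erase_insert (notMem_of_mem_extensions hp.2)]
    _ = ∑ M ∈ G.matchings k, #(G.extensions M) := card_sigma _ _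

lemma card_edgeFinset_le_card_extensions_add (M : Finset (Sym2 V)) :
    #G.edgeFinset ≤ #(G.extensions M) + 2 * #M * Fintype.card V := by
  set S : Finset V := M.biUnion Sym2.toFinset
  have hS : #S ≤ 2 * #M := by
    refine card_biUnion_le.trans ?_
    rw [mul_comm, ← smul_eq_mul, ← sum_const]
    refine sum_le_sum fun g _ => ?_
    induction g using Sym2.ind with
    | _ a b => rw [Sym2.toFinset_mk_eq]; exact card_le_two
  have hcover : G.edgeFinset ⊆ G.extensions M ∪ S.biUnion fun v => G.incidenceFinset v := by
    intro f hf
    by_cases hext : f ∈ G.extensions M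
    · exact mem_union_left _ hext
    · simp only [mem_extensions, mem_edgeFinset.1 hf, true_and, not_forall, not_not] at hext
      obtain ⟨g, hg, x, hxf, hxg⟩ := hext
      have hxS : x ∈ S := mem_biUnion.2 ⟨g, hg, Sym2.mem_toFinset.2 hxg⟩
      exact mem_union_right _ <| mem_biUnion.2
        ⟨x, hxS, (G.mem_incidenceFinset x f).2 ⟨mem_edgeFinset.1 hf, hxf⟩⟩
  calc #G.edgeFinset ≤ #(G.extensions M) + #(S.biUnion fun v => G.incidenceFinset v) :=
        (card_le_card hcover).trans (card_union_le _ _)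
    _ ≤ #(G.extensions M) + #S * Fintype.card V := by
        gcongr
        refine card_biUnion_le.trans (sum_le_card_nsmul _ _ _ fun v _ => ?_)
        exact (G.card_incidenceFinset_eq_degree v).trans_le (G.degree_lt_card_verts v).le
    _ ≤ #(G.extensions M) + 2 * #M * Fintype.card V := by gcongr

lemma card_edgeFinset_mul_card_matchings_le {k : ℕ}
    (hk : 4 * k * Fintype.card V ≤ #G.edgeFinset) :
    #G.edgeFinset * #(G.matchings k) ≤ 2 * ((k + 1) * #(G.matchings (k + 1))) := by
  rw [succ_mul_card_matchings, mul_sum, mul_comm, ← smul_eq_mul, ← sum_const]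
  refine sum_le_sum fun M hM => ?_
  have := card_edgeFinset_le_card_extensions_add (G := G) M
  rw [(mem_matchings.1 hM).1] at this
  linarith

lemma pow_card_edgeFinset_le_mul_card_matchings {k : ℕ}
    (hk : 4 * k * Fintype.card V ≤ #G.edgeFinset) :
    #G.edgeFinset ^ k ≤ 2 ^ k * k.factorial * #(G.matchings k) := by
  induction k with
  | zero =>
    simpa using card_pos.2 ⟨∅, mem_matchings.2 ⟨card_empty, by simp, by simp⟩⟩
  | succ k ih =>
    have hk' : 4 * k * Fintype.card V ≤ #G.edgeFinset := le_trans (by gcongr; omega) hk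
    calc #G.edgeFinset ^ (k + 1) = #G.edgeFinset ^ k * #G.edgeFinset := pow_succ _ _
      _ ≤ 2 ^ k * k.factorial * #(G.matchings k) * #G.edgeFinset := by gcongr; exact ih hk'
      _ = 2 ^ k * k.factorial * (#G.edgeFinset * #(G.matchings k)) := by ring
      _ ≤ 2 ^ k * k.factorial * (2 * ((k + 1) * #(G.matchings (k + 1)))) :=
        Nat.mul_le_mul_left _ (card_edgeFinset_mul_card_matchings_le hk')
      _ = 2 ^ (k + 1) * (k + 1).factorial * #(G.matchings (k + 1)) := by
        rw [Nat.factorial_succ]; ring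

end SimpleGraph

theorem matching_count_general {V : Type*} [Fintype V] (G : SimpleGraph V)
    (t : ℕ) (he : 4 * t * Fintype.card V ≤ G.edgeSet.ncard) :
    (G.edgeSet.ncard : ℝ) ^ t / (2 ^ t * t.factorial) ≤
      ({M : Finset (Sym2 V) | IsMatchingIn G t M}.ncard : ℝ) := by
  classical
  have hedges : G.edgeSet.ncard = #G.edgeFinset := by
    rw [← coe_edgeFinset, Set.ncard_coe_finset]
  have hmatchings : {M : Finset (Sym2 V) | IsMatchingIn G t M} = ↑(G.matchings t) := by
    ext M; simp
  rw [hedges] at he ⊢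
  rw [hmatchings, Set.ncard_coe_finset, div_le_iff₀ (by positivity)]
  exact_mod_cast (pow_card_edgeFinset_le_mul_card_matchings he).trans_eq (mul_comm _ _)

/-- If `G` is an `n`-vertex bipartite graph with at least `4tn` edges (`t ≥ 1`), then the
number of `t`-matchings in `G` is at least `e(G)^t / (2^t · t!)`. -/
theorem matching_count {V : Type*} [Fintype V] (G : SimpleGraph V) (hbip : G.Colorable 2)
    (t : ℕ) (ht : 1 ≤ t) (he : 4 * t * Fintype.card V ≤ G.edgeSet.ncard) :
    (G.edgeSet.ncard : ℝ) ^ t / (2 ^ t * t.factorial) ≤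
      ({M : Finset (Sym2 V) | IsMatchingIn G t M}.ncard : ℝ) :=
  matching_count_general G t he
end

section
/- For all integers m, n ≥ 2 and p ≥ 2, z(m, n, θ_{3,p}) ≤ 144 p^3 · ((mn)^{2/3} + m + n). -/
open SimpleGraph Filter

/-- `G` contains a copy of `H` (an injective graph homomorphism from `H` to `G`). -/
def SimpleGraph.Contains {α β : Type*} (G : SimpleGraph α) (H : SimpleGraph β) : Prop :=
  ∃ f : H →g G, Function.Injective f

/-- The theta graph `θ_{k,p}` (for `k ≥ 2`): `p` internally disjoint paths of length `k`
joining the two endpoints `Sum.inl false` and `Sum.inl true`; the internal vertices of the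
`i`-th path are `(i, 0), …, (i, k-2)`. -/
def thetaGraph (k p : ℕ) : SimpleGraph (Bool ⊕ (Fin p × Fin (k - 1))) :=
  SimpleGraph.fromRel fun x y =>
    match x, y with
    | Sum.inl b, Sum.inr (_, j) => (b = false ∧ (j : ℕ) = 0) ∨ (b = true ∧ (j : ℕ) = k - 2)
    | Sum.inr (i, j), Sum.inr (ii, jj) => i = ii ∧ (jj : ℕ) = (j : ℕ) + 1
    | _, _ => False

/-- The asymmetric bipartite Turán number `z(m, n, H)`: the maximum number of edges in a
bipartite graph with parts of sizes `m` and `n` containing no copy of `H`. -/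
noncomputable def zNum {β : Type*} (m n : ℕ) (H : SimpleGraph β) : ℕ :=
  sSup {N : ℕ | ∃ G : SimpleGraph (Fin m ⊕ Fin n),
    G ≤ completeBipartiteGraph (Fin m) (Fin n) ∧ ¬ G.Contains H ∧ G.edgeSet.ncard = N}

/-!
Let `E ⊆ α × β` be the edge set. Discarding the edges at a left vertex of degree `≤ a` or at a
right vertex of degree `≤ b` loses at most `a |α| + b |β|` edges, and every remaining edge `(y, x)`
is the middle of at least `a b` paths `u – x – y – v`. Call two vertices on the same side rich if
they have more than `p` common neighbours. For a fixed edge `(y, x)` fewer than `p` of the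
vertices `u` are rich with `y`, since otherwise Hall's theorem routes `p` disjoint paths of length
`3` from `y` to `x`; so for `a, b ≥ 4 (p - 1)` at least half of the paths through `(y, x)` avoid
rich pairs. For fixed ends `u, v`, the middle edges of such paths contain no matching of size `p`,
and a vertex lies on at most `p` of them, so a maximal matching shows that there are at most
`2 p (p - 1)` of them. Hence there are at most `4 p² |α| |β| / (a b)` remaining edges, and
`a ≈ |E| / 4|α|`, `b ≈ |E| / 4|β|` give `|E|³ ≤ 512 p² (|α| |β|)²` unless
`|E| < 16 p (|α| + |β|)`.
-/

open Finset Function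

theorem Finset.exists_injective_mem_of_card_le_card {ι γ : Type*} [DecidableEq γ]
    (Y : Finset ι) (t : ι → Finset γ) (h : ∀ y ∈ Y, #Y ≤ #(t y)) :
    ∃ f : Y → γ, Injective f ∧ ∀ y : Y, f y ∈ t y := by
  refine (all_card_le_biUnion_card_iff_exists_injective fun y : Y => t y).1 fun S => ?_
  obtain rfl | ⟨y, hy⟩ := S.eq_empty_or_nonempty
  · simp
  calc #S ≤ #Y := by simpa using card_le_univ S
    _ ≤ #(t y) := h y y.2
    _ ≤ #(S.biUnion fun y : Y => t y) := card_le_card (subset_biUnion_of_mem (fun y : Y => t y) hy)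

theorem Finset.card_le_card_filter_le_add_sub_one {γ : Type*} (s : Finset γ) (c : γ → ℕ) {p : ℕ}
    (h : #{a ∈ s | p < c a} < p) : #s ≤ #{a ∈ s | c a ≤ p} + (p - 1) := by
  have := card_filter_add_card_filter_not (s := s) (fun a => c a ≤ p)
  simp only [not_le] at this
  omega

theorem Finset.card_le_mul_of_forall_injOn_card_le {α β : Type*} [DecidableEq α] [DecidableEq β]
    {D : Finset (α × β)} {r c l : ℕ}
    (hrow : ∀ s ∈ D, #{t ∈ D | t.1 = s.1} ≤ r) (hcol : ∀ s ∈ D, #{t ∈ D | t.2 = s.2} ≤ c)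
    (hmatch : ∀ M ⊆ D, Set.InjOn Prod.fst (M : Set (α × β)) →
      Set.InjOn Prod.snd (M : Set (α × β)) → #M ≤ l) :
    #D ≤ (r + c) * l := by
  classical
  obtain ⟨M, hM, hmax⟩ := exists_max_image (D.powerset.filter fun M : Finset (α × β) =>
    Set.InjOn Prod.fst (M : Set (α × β)) ∧ Set.InjOn Prod.snd (M : Set (α × β))) card ⟨∅, by simp⟩
  simp only [mem_filter, mem_powerset] at hM hmax
  obtain ⟨hMD, hfst, hsnd⟩ := hM
  have hcover : D ⊆ M.biUnion fun s => {t ∈ D | t.1 = s.1} ∪ {t ∈ D | t.2 = s.2} := by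
    intro t ht
    by_contra hnot
    have hnew : ∀ s ∈ M, t.1 ≠ s.1 ∧ t.2 ≠ s.2 := by simpa [ht] using hnot
    have htM : t ∉ M := fun htM => (hnew t htM).1 rfl
    have := hmax (insert t M) ⟨insert_subset ht hMD, ?_, ?_⟩
    · rw [card_insert_of_notMem htM] at this
      omega
    all_goals
      rw [coe_insert, Set.injOn_insert htM]
      refine ⟨by assumption, ?_⟩
      rintro ⟨s, hs, hst⟩
    exacts [(hnew s hs).1 hst.symm, (hnew s hs).2 hst.symm]
  calc #D ≤ #(M.biUnion fun s => {t ∈ D | t.1 = s.1} ∪ {t ∈ D | t.2 = s.2}) := card_le_card hcover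
    _ ≤ ∑ s ∈ M, #({t ∈ D | t.1 = s.1} ∪ {t ∈ D | t.2 = s.2}) := card_biUnion_le
    _ ≤ ∑ s ∈ M, (r + c) := sum_le_sum fun s hs =>
        (card_union_le _ _).trans (add_le_add (hrow s (hMD hs)) (hcol s (hMD hs)))
    _ = #M * (r + c) := by rw [sum_const, smul_eq_mul]
    _ ≤ (r + c) * l := by rw [mul_comm]; exact Nat.mul_le_mul_left _ (hmatch M hMD hfst hsnd)

theorem Real.le_mul_rpow_two_thirds {e c x : ℝ} (he : 0 ≤ e) (hc : 0 ≤ c) (hx : 0 ≤ x)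
    (h : e ^ 3 ≤ c ^ 3 * x ^ 2) : e ≤ c * x ^ ((2 : ℝ) / 3) := by
  have hcube : (c * x ^ ((2 : ℝ) / 3)) ^ 3 = c ^ 3 * x ^ 2 := by
    rw [mul_pow, ← Real.rpow_natCast (x ^ _), ← Real.rpow_mul hx]
    norm_num
  exact (pow_le_pow_iff_left₀ he (by positivity) (by norm_num)).1 (hcube ▸ h)

theorem contains_thetaGraph_three {α β : Type*} {G : SimpleGraph (α ⊕ β)} {p : ℕ} (u : α) (v : β)
    (s : Fin p → α × β) (hfst : Injective (Prod.fst ∘ s)) (hsnd : Injective (Prod.snd ∘ s))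
    (hu : ∀ i, (s i).1 ≠ u) (hv : ∀ i, (s i).2 ≠ v)
    (hux : ∀ i, G.Adj (.inl u) (.inr (s i).2)) (hyx : ∀ i, G.Adj (.inl (s i).1) (.inr (s i).2))
    (hyv : ∀ i, G.Adj (.inl (s i).1) (.inr v)) :
    G.Contains (thetaGraph 3 p) := by
  let f : Bool ⊕ (Fin p × Fin 2) → α ⊕ β :=
    Sum.elim (fun b => bif b then .inr v else .inl u)
      (fun ij => if ij.2 = 0 then .inr (s ij.1).2 else .inl (s ij.1).1)
  refine ⟨⟨f, fun {z w} h => ?_⟩, ?_⟩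
  · rcases z with (_ | _) | ⟨i, j⟩ <;> rcases w with (_ | _) | ⟨i', j'⟩ <;>
      (try fin_cases j) <;> (try fin_cases j') <;> simp [thetaGraph, f] at h ⊢
    all_goals first
      | exact hux _ | exact (hux _).symm | exact hyv _ | exact (hyv _).symm
      | (subst h; exact hyx _) | (subst h; exact (hyx _).symm)
  · rintro ((_ | _) | ⟨i, j⟩) ((_ | _) | ⟨i', j'⟩) h <;>
      (try fin_cases j) <;> (try fin_cases j') <;> simp [f] at h ⊢
    all_goals first
      | exact hfst h | exact hsnd h | exact hu _ h | exact hv _ h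
      | exact hu _ h.symm | exact hv _ h.symm

theorem ncard_edgeSet_le_card_filter_adj {α β : Type*} [Fintype α] [Fintype β]
    (G : SimpleGraph (α ⊕ β)) [DecidableRel G.Adj] (hG : G ≤ completeBipartiteGraph α β) :
    G.edgeSet.ncard ≤ #{t : α × β | G.Adj (.inl t.1) (.inr t.2)} := by
  calc G.edgeSet.ncard
      ≤ ((fun t : α × β => s(Sum.inl t.1, Sum.inr t.2)) ''
          ↑({t : α × β | G.Adj (.inl t.1) (.inr t.2)} : Finset _)).ncard := by
        refine Set.ncard_le_ncard (fun e he => ?_) (Set.toFinite _)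
        induction e using Sym2.ind with
        | h x y =>
          have hxy := hG he
          rcases x with a | b <;> rcases y with a' | b' <;> simp at hxy ⊢
          exacts [he, G.adj_symm he]
    _ ≤ _ := (Set.ncard_image_le (finite_toSet _)).trans (Set.ncard_coe_finset _).le

theorem zNum_le_of_forall_ncard_le {β : Type*} {m n : ℕ} {H : SimpleGraph β} {B : ℝ}
    (hB : 0 ≤ B) (h : ∀ G : SimpleGraph (Fin m ⊕ Fin n),
      G ≤ completeBipartiteGraph (Fin m) (Fin n) → ¬G.Contains H → (G.edgeSet.ncard : ℝ) ≤ B) :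
    (zNum m n H : ℝ) ≤ B := by
  refine le_trans (Nat.cast_le.2 (csSup_le' ?_)) (Nat.floor_le hB)
  rintro _ ⟨G, hG, hH, rfl⟩
  exact Nat.le_floor (h G hG hH)

namespace BipartiteTheta

section Theta

variable {α β : Type*}

/-- `E` contains `θ_{3,p}` with endpoints `u` and `v`: `M` is a matching of middle edges `(y, x)`
of paths `u – x – y – v`. -/
def HasTheta (p : ℕ) (E : Finset (α × β)) : Prop :=
  ∃ (u : α) (v : β) (M : Finset (α × β)), p ≤ #M ∧ Set.InjOn Prod.fst (M : Set (α × β)) ∧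
    Set.InjOn Prod.snd (M : Set (α × β)) ∧
    ∀ s ∈ M, s.1 ≠ u ∧ s.2 ≠ v ∧ (u, s.2) ∈ E ∧ s ∈ E ∧ (s.1, v) ∈ E

theorem HasTheta.of_map_prodComm {p : ℕ} {E : Finset (α × β)}
    (h : HasTheta p (E.map (Equiv.prodComm α β).toEmbedding)) : HasTheta p E := by
  obtain ⟨u, v, M, hcard, hfst, hsnd, hM⟩ := h
  refine ⟨v, u, M.map (Equiv.prodComm β α).toEmbedding, by simpa using hcard, ?_, ?_, ?_⟩
  · rw [coe_map]
    rintro _ ⟨s, hs, rfl⟩ _ ⟨s', hs', rfl⟩ h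
    rw [hsnd hs hs' h]
  · rw [coe_map]
    rintro _ ⟨s, hs, rfl⟩ _ ⟨s', hs', rfl⟩ h
    rw [hfst hs hs' h]
  · intro s hs
    rw [mem_map_equiv] at hs
    obtain ⟨hu, hv, hux, hs, hyv⟩ := hM _ hs
    exact ⟨hv, hu, by simpa using hyv, by simpa using hs, by simpa using hux⟩

theorem contains_thetaGraph_of_hasTheta {G : SimpleGraph (α ⊕ β)} {p : ℕ} {E : Finset (α × β)}
    (hE : ∀ t ∈ E, G.Adj (.inl t.1) (.inr t.2)) (h : HasTheta p E) :
    G.Contains (thetaGraph 3 p) := by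
  obtain ⟨u, v, M, hcard, hfst, hsnd, hM⟩ := h
  let s : Fin p → α × β := fun i => M.equivFin.symm (Fin.castLE hcard i)
  have hs : Injective s := fun i j hij =>
    Fin.castLE_injective hcard (M.equivFin.symm.injective (Subtype.ext hij))
  have hsM : ∀ i, s i ∈ M := fun i => (M.equivFin.symm _).2
  exact contains_thetaGraph_three u v s (fun i j h => hs (hfst (hsM i) (hsM j) h))
    (fun i j h => hs (hsnd (hsM i) (hsM j) h))
    (fun i => (hM _ (hsM i)).1) (fun i => (hM _ (hsM i)).2.1)
    (fun i => hE _ (hM _ (hsM i)).2.2.1) (fun i => hE _ (hM _ (hsM i)).2.2.2.1)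
    (fun i => hE _ (hM _ (hsM i)).2.2.2.2)

end Theta

section Counting

variable {α β : Type*} [DecidableEq α] [DecidableEq β] {p : ℕ} {E : Finset (α × β)}

def nbrsL (E : Finset (α × β)) (a : α) : Finset β := {t ∈ E | t.1 = a}.image Prod.snd

def nbrsR (E : Finset (α × β)) (b : β) : Finset α := {t ∈ E | t.2 = b}.image Prod.fst

@[simp] theorem mem_nbrsL {a : α} {b : β} : b ∈ nbrsL E a ↔ (a, b) ∈ E := by simp [nbrsL]

@[simp] theorem mem_nbrsR {a : α} {b : β} : a ∈ nbrsR E b ↔ (a, b) ∈ E := by simp [nbrsR]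

@[simp] theorem nbrsL_map_prodComm (b : β) :
    nbrsL (E.map (Equiv.prodComm α β).toEmbedding) b = nbrsR E b := by
  ext; simp

@[simp] theorem nbrsR_map_prodComm (a : α) :
    nbrsR (E.map (Equiv.prodComm α β).toEmbedding) a = nbrsL E a := by
  ext; simp

theorem card_nbrsL {a : α} : #(nbrsL E a) = #{t ∈ E | t.1 = a} :=
  card_image_of_injOn fun _ ht _ ht' h =>
    Prod.ext ((mem_filter.1 ht).2.trans (mem_filter.1 ht').2.symm) h

theorem card_filter_lt_card_nbrsL_inter_lt (hE : ¬HasTheta p E) (u : α) (v : β) :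
    #{y ∈ (nbrsR E v).erase u | p < #(nbrsL E u ∩ nbrsL E y)} < p := by
  by_contra! h
  obtain ⟨Y, hYsub, hYcard⟩ := exists_subset_card_eq h
  have hY : ∀ y ∈ Y, y ≠ u ∧ (y, v) ∈ E ∧ p < #(nbrsL E u ∩ nbrsL E y) := fun y hy => by
    simpa [and_assoc] using hYsub hy
  obtain ⟨f, hf, hft⟩ := Y.exists_injective_mem_of_card_le_card
    (fun y => (nbrsL E u ∩ nbrsL E y).erase v) fun y hy => by
      have := pred_card_le_card_erase (s := nbrsL E u ∩ nbrsL E y) (a := v)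
      have := (hY y hy).2.2
      omega
  refine hE ⟨u, v, univ.image fun y : Y => (y.1, f y), ?_, ?_, ?_, ?_⟩
  · rw [card_image_of_injective _ fun y y' h => Subtype.ext (congrArg Prod.fst h)]
    simp [hYcard]
  · simp only [coe_image, coe_univ, Set.image_univ]
    rintro _ ⟨y, rfl⟩ _ ⟨y', rfl⟩ h
    rw [Subtype.ext h]
  · simp only [coe_image, coe_univ, Set.image_univ]
    rintro _ ⟨y, rfl⟩ _ ⟨y', rfl⟩ h
    rw [hf h]
  · simp only [mem_image, mem_univ, true_and]
    rintro _ ⟨y, rfl⟩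
    have hfy := hft y
    simp only [mem_erase, mem_inter, mem_nbrsL] at hfy
    exact ⟨(hY y y.2).1, hfy.1, hfy.2.1, hfy.2.2, (hY y y.2).2.1⟩

theorem card_filter_lt_card_nbrsR_inter_lt (hE : ¬HasTheta p E) (x : β) (y : α) :
    #{v ∈ (nbrsL E y).erase x | p < #(nbrsR E x ∩ nbrsR E v)} < p := by
  simpa using card_filter_lt_card_nbrsL_inter_lt (mt HasTheta.of_map_prodComm hE) x y

/-- The pairs `(u, v)` for which `u – x – y – v` is a path such that neither `{y, u}` nor
`{x, v}` has more than `p` common neighbours. -/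
def sparseEnds (p : ℕ) (E : Finset (α × β)) (y : α) (x : β) : Finset (α × β) :=
  {u ∈ (nbrsR E x).erase y | #(nbrsL E y ∩ nbrsL E u) ≤ p} ×ˢ
    {v ∈ (nbrsL E y).erase x | #(nbrsR E x ∩ nbrsR E v) ≤ p}

theorem card_mul_card_le_two_mul_card_sparseEnds (hE : ¬HasTheta p E) (y : α) (x : β)
    (hx : 4 * (p - 1) ≤ #((nbrsR E x).erase y)) (hy : 4 * (p - 1) ≤ #((nbrsL E y).erase x)) :
    #((nbrsR E x).erase y) * #((nbrsL E y).erase x) ≤ 2 * #(sparseEnds p E y x) := by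
  have hu := card_le_card_filter_le_add_sub_one _ _ (card_filter_lt_card_nbrsL_inter_lt hE y x)
  have hv := card_le_card_filter_le_add_sub_one _ _ (card_filter_lt_card_nbrsR_inter_lt hE x y)
  rw [sparseEnds, card_product]
  nlinarith

theorem card_filter_mem_sparseEnds_le (hE : ¬HasTheta p E) (u : α) (v : β) :
    #{t ∈ E | (u, v) ∈ sparseEnds p E t.1 t.2} ≤ 2 * p * (p - 1) := by
  set D := {t ∈ E | (u, v) ∈ sparseEnds p E t.1 t.2}
  have hD : ∀ t ∈ D, t ∈ E ∧ u ≠ t.1 ∧ (u, t.2) ∈ E ∧ #(nbrsL E t.1 ∩ nbrsL E u) ≤ p ∧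
      v ≠ t.2 ∧ (t.1, v) ∈ E ∧ #(nbrsR E t.2 ∩ nbrsR E v) ≤ p := by
    simp +contextual [D, sparseEnds]
  calc #D ≤ (p + p) * (p - 1) := card_le_mul_of_forall_injOn_card_le ?_ ?_ ?_
    _ = 2 * p * (p - 1) := by ring
  · refine fun s hs => le_trans (card_le_card_of_injOn Prod.snd ?_ ?_) (hD s hs).2.2.2.1
    · intro t ht
      obtain ⟨ht, h1⟩ := mem_filter.1 ht
      obtain ⟨htE, -, hut, -⟩ := hD t ht
      simp [← h1, htE, hut]
    · intro t ht t' ht' h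
      exact Prod.ext ((mem_filter.1 ht).2.trans (mem_filter.1 ht').2.symm) h
  · refine fun s hs => le_trans (card_le_card_of_injOn Prod.fst ?_ ?_) (hD s hs).2.2.2.2.2.2
    · intro t ht
      obtain ⟨ht, h2⟩ := mem_filter.1 ht
      obtain ⟨htE, -, -, -, -, htv, -⟩ := hD t ht
      simp [← h2, htE, htv]
    · intro t ht t' ht' h
      exact Prod.ext h ((mem_filter.1 ht).2.trans (mem_filter.1 ht').2.symm)
  · intro M hMD hfst hsnd
    by_contra! hM
    refine hE ⟨u, v, M, by omega, hfst, hsnd, fun s hs => ?_⟩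
    obtain ⟨hs, hu, hus, -, hv, hsv, -⟩ := hD s (hMD hs)
    exact ⟨Ne.symm hu, Ne.symm hv, hus, hs, hsv⟩

theorem card_filter_card_nbrsL_le [Fintype α] (a : ℕ) :
    #{t ∈ E | #(nbrsL E t.1) ≤ a} ≤ a * Fintype.card α := by
  refine card_le_mul_card_image_of_maps_to (f := Prod.fst) (fun _ _ => mem_univ _) a fun y _ => ?_
  rw [filter_filter]
  by_cases h : #(nbrsL E y) ≤ a
  · calc _ ≤ #{t ∈ E | t.1 = y} := card_le_card (monotone_filter_right _ fun _ _ ht => ht.2)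
      _ = #(nbrsL E y) := card_nbrsL.symm
      _ ≤ a := h
  · rw [filter_false_of_mem]
    · simp
    · rintro t - ⟨ht, rfl⟩
      exact h ht

theorem card_filter_card_nbrsR_le [Fintype β] (b : ℕ) :
    #{t ∈ E | #(nbrsR E t.2) ≤ b} ≤ b * Fintype.card β := by
  convert card_filter_card_nbrsL_le (E := E.map (Equiv.prodComm α β).toEmbedding) b using 1
  rw [filter_map, card_map]
  simp

variable [Fintype α] [Fintype β]

theorem card_le_card_filter_add (a b : ℕ) :
    #E ≤ #{t ∈ E | a < #(nbrsL E t.1) ∧ b < #(nbrsR E t.2)} +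
      a * Fintype.card α + b * Fintype.card β := by
  have hlow : {t ∈ E | ¬(a < #(nbrsL E t.1) ∧ b < #(nbrsR E t.2))} ⊆
      {t ∈ E | #(nbrsL E t.1) ≤ a} ∪ {t ∈ E | #(nbrsR E t.2) ≤ b} := by
    intro t ht
    simp only [mem_filter, mem_union, not_and_or, not_lt] at ht ⊢
    tauto
  have := card_filter_add_card_filter_not (s := E) fun t => a < #(nbrsL E t.1) ∧ b < #(nbrsR E t.2)
  have := (card_le_card hlow).trans (card_union_le _ _)
  have := card_filter_card_nbrsL_le (E := E) a
  have := card_filter_card_nbrsR_le (E := E) b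
  omega

theorem sum_card_sparseEnds_le (hE : ¬HasTheta p E) :
    ∑ t ∈ E, #(sparseEnds p E t.1 t.2) ≤ Fintype.card α * Fintype.card β * (2 * p * (p - 1)) := by
  calc ∑ t ∈ E, #(sparseEnds p E t.1 t.2)
      = ∑ t ∈ E, #(univ.bipartiteAbove (fun t w => w ∈ sparseEnds p E t.1 t.2) t) := by
        simp [bipartiteAbove]
    _ = ∑ w, #(E.bipartiteBelow (fun t w => w ∈ sparseEnds p E t.1 t.2) w) :=
        sum_card_bipartiteAbove_eq_sum_card_bipartiteBelow _
    _ ≤ ∑ _w : α × β, 2 * p * (p - 1) :=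
        sum_le_sum fun w _ => card_filter_mem_sparseEnds_le hE w.1 w.2
    _ = Fintype.card α * Fintype.card β * (2 * p * (p - 1)) := by simp

theorem card_filter_mul_le (hE : ¬HasTheta p E) {a b : ℕ} (ha : 4 * (p - 1) ≤ a)
    (hb : 4 * (p - 1) ≤ b) :
    #{t ∈ E | a < #(nbrsL E t.1) ∧ b < #(nbrsR E t.2)} * (b * a) ≤
      2 * (Fintype.card α * Fintype.card β * (2 * p * (p - 1))) := by
  set F := {t ∈ E | a < #(nbrsL E t.1) ∧ b < #(nbrsR E t.2)}
  have hdeg : ∀ t ∈ F, b ≤ #((nbrsR E t.2).erase t.1) ∧ a ≤ #((nbrsL E t.1).erase t.2) := by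
    intro t ht
    obtain ⟨-, hta, htb⟩ := mem_filter.1 ht
    have := pred_card_le_card_erase (s := nbrsR E t.2) (a := t.1)
    have := pred_card_le_card_erase (s := nbrsL E t.1) (a := t.2)
    omega
  calc #F * (b * a) = ∑ t ∈ F, b * a := by rw [sum_const, smul_eq_mul]
    _ ≤ ∑ t ∈ F, #((nbrsR E t.2).erase t.1) * #((nbrsL E t.1).erase t.2) :=
        sum_le_sum fun t ht => Nat.mul_le_mul (hdeg t ht).1 (hdeg t ht).2
    _ ≤ ∑ t ∈ F, 2 * #(sparseEnds p E t.1 t.2) := sum_le_sum fun t ht =>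
        card_mul_card_le_two_mul_card_sparseEnds hE t.1 t.2
          (hb.trans (hdeg t ht).1) (ha.trans (hdeg t ht).2)
    _ ≤ 2 * ∑ t ∈ E, #(sparseEnds p E t.1 t.2) := by
        rw [← mul_sum]
        exact Nat.mul_le_mul_left _ (sum_le_sum_of_subset (filter_subset _ _))
    _ ≤ _ := Nat.mul_le_mul_left _ (sum_card_sparseEnds_le hE)

theorem card_pow_three_le (hp : 0 < p) (hE : ¬HasTheta p E)
    (hlarge : 16 * p * (Fintype.card α + Fintype.card β) ≤ #E) :
    #E ^ 3 ≤ 512 * p ^ 2 * (Fintype.card α * Fintype.card β) ^ 2 := by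
  obtain hE0 | ⟨t, -⟩ := E.eq_empty_or_nonempty
  · simp [hE0]
  set e := #E
  set M := Fintype.card α
  set N := Fintype.card β
  have hM : 0 < M := Fintype.card_pos_iff.2 ⟨t.1⟩
  have hN : 0 < N := Fintype.card_pos_iff.2 ⟨t.2⟩
  have hea := Nat.lt_mul_div_succ e (show 0 < 4 * M by omega)
  have heb := Nat.lt_mul_div_succ e (show 0 < 4 * N by omega)
  have haM := Nat.div_mul_le_self e (4 * M)
  have hbN := Nat.div_mul_le_self e (4 * N)
  set a := e / (4 * M)
  set b := e / (4 * N)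
  have ha : 4 * p ≤ a := (Nat.le_div_iff_mul_le (by positivity)).2 (by nlinarith)
  have hb : 4 * p ≤ b := (Nat.le_div_iff_mul_le (by positivity)).2 (by nlinarith)
  have hprune := card_le_card_filter_add (E := E) a b
  have hcount := card_filter_mul_le hE (a := a) (b := b) (by omega) (by omega)
  set f := #{t ∈ E | a < #(nbrsL E t.1) ∧ b < #(nbrsR E t.2)}
  have hef : e ≤ 2 * f := by nlinarith
  replace hea : e ≤ 8 * M * a := by nlinarith
  replace heb : e ≤ 8 * N * b := by nlinarith
  calc e ^ 3 = e * e * e := by ring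
    _ ≤ (2 * f) * (8 * M * a) * (8 * N * b) := by gcongr
    _ = 128 * (f * (b * a)) * (M * N) := by ring
    _ ≤ 128 * (2 * (M * N * (2 * p * (p - 1)))) * (M * N) := by gcongr
    _ = 512 * (p * (p - 1)) * (M * N) ^ 2 := by ring
    _ ≤ 512 * (p * p) * (M * N) ^ 2 := by gcongr; exact Nat.sub_le p 1
    _ = 512 * p ^ 2 * (M * N) ^ 2 := by ring

theorem card_le_of_not_hasTheta (hp : 0 < p) (hE : ¬HasTheta p E) :
    (#E : ℝ) ≤ 8 * p * ((Fintype.card α : ℝ) * Fintype.card β) ^ ((2 : ℝ) / 3) +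
      16 * p * (Fintype.card α + Fintype.card β) := by
  have hX : 0 ≤ 8 * (p : ℝ) * ((Fintype.card α : ℝ) * Fintype.card β) ^ ((2 : ℝ) / 3) := by
    positivity
  have hY : (0 : ℝ) ≤ 16 * p * (Fintype.card α + Fintype.card β) := by positivity
  rcases lt_or_ge #E (16 * p * (Fintype.card α + Fintype.card β)) with hsmall | hlarge
  · have : (#E : ℝ) ≤ 16 * p * (Fintype.card α + Fintype.card β) := by exact_mod_cast hsmall.le
    linarith
  · have h3 : (#E : ℝ) ^ 3 ≤ 512 * p ^ 2 * ((Fintype.card α : ℝ) * Fintype.card β) ^ 2 := by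
      exact_mod_cast card_pow_three_le hp hE hlarge
    have hp1 : (1 : ℝ) ≤ p := by exact_mod_cast hp
    have : (#E : ℝ) ≤ 8 * p * ((Fintype.card α : ℝ) * Fintype.card β) ^ ((2 : ℝ) / 3) := by
      refine Real.le_mul_rpow_two_thirds (by positivity) (by positivity) (by positivity) ?_
      nlinarith [pow_le_pow_right₀ hp1 (show 2 ≤ 3 by norm_num),
        sq_nonneg ((Fintype.card α : ℝ) * Fintype.card β)]
    linarith

end Counting

end BipartiteTheta

theorem z_theta3_upper_general (p : ℕ) (hp : 2 ≤ p) (m n : ℕ) :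
    (zNum m n (thetaGraph 3 p) : ℝ) ≤
      144 * (p : ℝ) ^ 3 * (((m : ℝ) * n) ^ ((2 : ℝ) / 3) + m + n) := by
  classical
  refine zNum_le_of_forall_ncard_le (by positivity) fun G hG hθ => ?_
  set E : Finset (Fin m × Fin n) := {t | G.Adj (.inl t.1) (.inr t.2)}
  have hE : ¬BipartiteTheta.HasTheta p E := fun h =>
    hθ (BipartiteTheta.contains_thetaGraph_of_hasTheta (fun t ht => (mem_filter.1 ht).2) h)
  have hbound := BipartiteTheta.card_le_of_not_hasTheta (by omega) hE
  simp only [Fintype.card_fin] at hbound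
  have hp3 : (p : ℝ) ≤ p ^ 3 := le_self_pow₀ (by exact_mod_cast (by omega : 1 ≤ p)) (by norm_num)
  have hX : 0 ≤ ((m : ℝ) * n) ^ ((2 : ℝ) / 3) := by positivity
  calc (G.edgeSet.ncard : ℝ) ≤ #E := by exact_mod_cast ncard_edgeSet_le_card_filter_adj G hG
    _ ≤ _ := hbound
    _ ≤ _ := by nlinarith [mul_le_mul_of_nonneg_right hp3 hX,
      mul_le_mul_of_nonneg_right hp3 (by positivity : (0 : ℝ) ≤ m + n)]

/-- For all $m, n ≥ 2$ and $p ≥ 2$, $z(m, n, θ_{3,p}) ≤ 144 p^3 ((mn)^{2/3} + m + n)$. -/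
theorem z_theta3_upper (p : ℕ) (hp : 2 ≤ p) (m n : ℕ) (hm : 2 ≤ m) (hn : 2 ≤ n) :
    (zNum m n (thetaGraph 3 p) : ℝ) ≤
      144 * (p : ℝ) ^ 3 * (((m : ℝ) * n) ^ ((2 : ℝ) / 3) + m + n) :=
  z_theta3_upper_general p hp m n
end
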